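/- Fix ℏ ∈ ℂ with ℏ ≠ 0 and N ∈ ℂ. There is exactly one formal power series g = Σ_{k≥0} c_k·u^k ∈ ℂ[[u]] with c_0 = 1 satisfying the differential equation (u²/4)·g''(u) + (u/2)·g'(u) − (1/ℏ)·g'(u) + ((1 − 4N²)/16)·g(u) = 0, and its coefficients are c_k = ℏ^k·B_k(N)/(16^k·k!) where B_k(N) = Π_{i=1}^{k} ((2i−1)² − 4N²). (This differential equation expresses that Φ(λ) = g(1/λ) is an eigenfunction with eigenvalue 1/ℏ² of the Kac–Schwarz operator c_N = (1/4)·d²/dλ² + (1/ℏ)·d/dλ + 1/ℏ² + (1−4N²)/(16λ²); thus the first basis vector of the generalized Brezin–Gross–Witten point of the Sato Grassmannian is uniquely determined by c_N together with the normalization c_0 = 1.) -/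

import Mathlib

noncomputable section

namespace BGW5

/-- Formal derivative of a one-variable formal power series. -/
def d (g : PowerSeries ℂ) : PowerSeries ℂ := PowerSeries.derivative ℂ g

/-- `B_k(N) = Π_{i=1}^{k} ((2i−1)² − 4N²)`, with `B_0(N) = 1`. -/
def B (k : ℕ) (N : ℂ) : ℂ := ∏ i ∈ Finset.range k, (((2*i+1 : ℕ) : ℂ)^2 - 4*N^2)

/-- The differential equation `(u²/4)·g'' + (u/2)·g' − (1/ℏ)·g' + ((1−4N²)/16)·g = 0`. -/
def ODE (ℏ N : ℂ) (g : PowerSeries ℂ) : Prop :=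
  (1/4 : ℂ) • (PowerSeries.X^2 * d (d g)) + (1/2 : ℂ) • (PowerSeries.X * d g)
    - ℏ⁻¹ • d g + ((1 - 4*N^2)/16) • g = 0

end BGW5

/-!
The ODE is the Euler-type operator `(u²/4)∂² + (u/2)∂ + (1−4N²)/16`, which acts on `u^k` by the
scalar `((2k+1)² − 4N²)/16`, plus the lowering term `−ℏ⁻¹∂`. Comparing coefficients of `u^k` it
becomes the first-order recurrence `(k+1)·c_{k+1} = ℏ((2k+1)² − 4N²)/16 · c_k`, so `c_0 = 1`
determines the series, and unrolling the recurrence gives `c_k = ℏ^k B_k(N) / (16^k k!)`.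
-/

open BGW5 PowerSeries Finset

namespace PowerSeries

theorem eq_mk_prod_range_iff {R : Type*} [CommSemiring R] (r : ℕ → R) (g : R⟦X⟧) :
    g = mk (fun k => ∏ i ∈ range k, r i) ↔
      constantCoeff g = 1 ∧ ∀ k, coeff (k + 1) g = r k * coeff k g := by
  constructor
  · rintro rfl
    refine ⟨by simp [← coeff_zero_eq_constantCoeff_apply], fun k => ?_⟩
    simp only [coeff_mk, prod_range_succ, mul_comm]
  · rintro ⟨h0, hsucc⟩
    ext k
    induction k with
    | zero => simpa using h0
    | succ k ih => rw [hsucc, ih, coeff_mk, coeff_mk, prod_range_succ, mul_comm]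

end PowerSeries

namespace BGW5

theorem coeff_d (g : PowerSeries ℂ) (k : ℕ) :
    coeff k (d g) = ((k : ℂ) + 1) * coeff (k + 1) g := by
  simp only [d, coeff_derivative]
  ring

theorem coeff_X_mul_d (g : PowerSeries ℂ) (k : ℕ) :
    coeff k (X * d g) = (k : ℂ) * coeff k g := by
  cases k with
  | zero => simp
  | succ k => rw [coeff_succ_X_mul, coeff_d]; push_cast; ring

theorem coeff_X_sq_mul_d_d (g : PowerSeries ℂ) (k : ℕ) :
    coeff k (X ^ 2 * d (d g)) = (k : ℂ) * ((k : ℂ) - 1) * coeff k g := by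
  match k with
  | 0 => simp [pow_two, mul_assoc]
  | 1 => simp [pow_two, mul_assoc, coeff_succ_X_mul]
  | k + 2 =>
    rw [pow_two, mul_assoc, coeff_succ_X_mul, coeff_succ_X_mul, coeff_d, coeff_d]
    push_cast
    ring

def coeffRatio (ℏ N : ℂ) (k : ℕ) : ℂ := ℏ * ((2 * k + 1) ^ 2 - 4 * N ^ 2) / (16 * (k + 1))

theorem ODE_iff_coeff_succ {ℏ N : ℂ} (hℏ : ℏ ≠ 0) (g : PowerSeries ℂ) :
    ODE ℏ N g ↔ ∀ k, coeff (k + 1) g = coeffRatio ℏ N k * coeff k g := by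
  rw [ODE, PowerSeries.ext_iff]
  refine forall_congr' fun k => ?_
  have hk : (k : ℂ) + 1 ≠ 0 := Nat.cast_add_one_ne_zero k
  simp only [map_add, map_sub, map_smul, coeff_X_sq_mul_d_d, coeff_X_mul_d, coeff_d,
    map_zero, smul_eq_mul, coeffRatio]
  have euler : ∀ c c' : ℂ, 1 / 4 * (k * (k - 1) * c) + 1 / 2 * (k * c) - ℏ⁻¹ * ((k + 1) * c')
      + (1 - 4 * N ^ 2) / 16 * c = ((2 * k + 1) ^ 2 - 4 * N ^ 2) / 16 * c - ℏ⁻¹ * ((k + 1) * c') :=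
    fun c c' => by ring
  rw [euler, sub_eq_zero, eq_comm, inv_mul_eq_iff_eq_mul₀ hℏ, mul_comm, ← eq_div_iff hk]
  congr! 1
  field_simp

theorem prod_range_coeffRatio (ℏ N : ℂ) (k : ℕ) :
    ∏ i ∈ range k, coeffRatio ℏ N i = ℏ ^ k * B k N / (16 ^ k * (k.factorial : ℂ)) := by
  simp only [coeffRatio, prod_div_distrib, prod_mul_distrib, prod_const, card_range, B,
    ← prod_range_add_one_eq_factorial]
  push_cast
  rfl

end BGW5

/-- there is exactly one formal power series `g ∈ ℂ[[u]]` with constant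
term `1` satisfying the ODE (expressing that `Φ(λ) = g(1/λ)` is an eigenfunction of the
Kac–Schwarz operator `c_N` with eigenvalue `1/ℏ²`), and its coefficients are
`c_k = ℏ^k·B_k(N)/(16^k·k!)`. -/
theorem kac_schwarz_eigenfunction_unique (ℏ N : ℂ) (hℏ : ℏ ≠ 0) :
    (∃! g : PowerSeries ℂ, PowerSeries.constantCoeff g = 1 ∧ ODE ℏ N g) ∧
    (∀ g : PowerSeries ℂ, PowerSeries.constantCoeff g = 1 → ODE ℏ N g →
      ∀ k : ℕ, PowerSeries.coeff k g =
        ℏ^k * B k N / (16^k * (Nat.factorial k : ℂ))) := by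
  have solution_iff : ∀ g : PowerSeries ℂ, constantCoeff g = 1 ∧ ODE ℏ N g ↔
      g = mk fun k => ∏ i ∈ range k, coeffRatio ℏ N i := fun g => by
    rw [ODE_iff_coeff_succ hℏ, eq_mk_prod_range_iff]
  refine ⟨⟨_, (solution_iff _).mpr rfl, fun g hg => (solution_iff g).mp hg⟩, ?_⟩
  intro g h0 hg k
  rw [(solution_iff g).mp ⟨h0, hg⟩, coeff_mk, prod_range_coeffRatio]
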